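/- Let Ψ(λ) = t₁/3 − (t₂ − λ)², with roots u^± = t₂ ± √(t₁/3) (t₁ > 0). With S₂ = [[−1/2, 0],[0, 0]], S₁ = 0, and Ω₁ = [[0,1],[1,0]], the central invariant formula c(u) = (1/3)·(Ψ'(u))²·(∂ₖΨ ∂ₗΨ (S₂^{kl} − u S₁^{kl})) / (∂ₖΨ ∂ₗΨ Ω₁^{kl})², evaluated at λ = u^± with the partial derivatives ∂Ψ/∂t₁ = 1/3, ∂Ψ/∂t₂ = −2(t₂ − λ), gives c(u⁺) = c(u⁻) = −1/24. -/

import Mathlib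

open Matrix

/-- S₂ = [[−1/2, 0], [0, 0]]. -/
noncomputable def S2 : Matrix (Fin 2) (Fin 2) ℝ := !![-1/2, 0; 0, 0]

/-- S₁ = 0. -/
noncomputable def S1 : Matrix (Fin 2) (Fin 2) ℝ := 0

/-- Ω₁ = [[0,1],[1,0]]. -/
noncomputable def Om1 : Matrix (Fin 2) (Fin 2) ℝ := !![0, 1; 1, 0]

/-- The gradient of Ψ(λ;t) = t₁/3 − (t₂ − λ)² in (t₁, t₂): (1/3, −2(t₂ − λ)). -/
noncomputable def gradPsi (t₂ lam : ℝ) : Fin 2 → ℝ := ![1/3, -2*(t₂ - lam)]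

/-!
Both quadratic forms are explicit: `∂Ψ·(S₂ − λS₁)·∂Ψ = −1/18` is constant and
`∂Ψ·Ω₁·∂Ψ = −(4/3)(t₂ − λ)`, so `(Ψ')² = 4(t₂ − λ)²` cancels against the squared denominator and
`c(λ) = −1/24` at every `λ ≠ t₂`. The roots `u^±` differ from `t₂` because `t₁ > 0`.
-/

lemma sq_sub_eq_of_eq_add_sqrt_or_sub_sqrt {a t u : ℝ} (ha : 0 ≤ a)
    (hu : u = t + Real.sqrt a ∨ u = t - Real.sqrt a) : (t - u) ^ 2 = a := by
  rcases hu with rfl | rfl <;> simp [Real.sq_sqrt ha]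

lemma gradPsi_S_form (t₂ u : ℝ) :
    ∑ k : Fin 2, ∑ l : Fin 2, gradPsi t₂ u k * gradPsi t₂ u l * (S2 k l - u * S1 k l) = -1/18 := by
  simp only [S2, S1, gradPsi, Fin.sum_univ_two, Matrix.zero_apply, Matrix.of_apply,
    Matrix.cons_val_zero, Matrix.cons_val_one, Matrix.cons_val',
    Matrix.empty_val', Matrix.cons_val_fin_one]
  ring

lemma gradPsi_Om1_form (t₂ u : ℝ) :
    ∑ k : Fin 2, ∑ l : Fin 2, gradPsi t₂ u k * gradPsi t₂ u l * Om1 k l = -(4/3) * (t₂ - u) := by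
  simp only [Om1, gradPsi, Fin.sum_univ_two, Matrix.of_apply,
    Matrix.cons_val_zero, Matrix.cons_val_one, Matrix.cons_val',
    Matrix.empty_val', Matrix.cons_val_fin_one]
  ring

lemma centralInvariant_eq {t₂ u : ℝ} (hu : t₂ - u ≠ 0) :
    (1/3) * (2*(t₂ - u))^2 *
        ((∑ k : Fin 2, ∑ l : Fin 2, gradPsi t₂ u k * gradPsi t₂ u l * (S2 k l - u * S1 k l)) /
          (∑ k : Fin 2, ∑ l : Fin 2, gradPsi t₂ u k * gradPsi t₂ u l * Om1 k l)^2)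
      = -1/24 := by
  rw [gradPsi_S_form, gradPsi_Om1_form]
  field_simp
  ring

/-- for t₁ > 0, the roots u^± = t₂ ± √(t₁/3) of Ψ(λ) = t₁/3 − (t₂ − λ)²
satisfy Ψ(u^±) = 0, and the central invariant formula
c(u) = (1/3)(Ψ'(u))²·(∂ₖΨ∂ₗΨ(S₂ − uS₁)^{kl})/(∂ₖΨ∂ₗΨΩ₁^{kl})² gives −1/24 at both roots. -/
theorem stmt_16 (t₁ t₂ : ℝ) (h : 0 < t₁) :
    ∀ u : ℝ, (u = t₂ + Real.sqrt (t₁/3) ∨ u = t₂ - Real.sqrt (t₁/3)) →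
      (t₁/3 - (t₂ - u)^2 = 0) ∧
      (1/3) * (2*(t₂ - u))^2 *
          ((∑ k : Fin 2, ∑ l : Fin 2, gradPsi t₂ u k * gradPsi t₂ u l * (S2 k l - u * S1 k l)) /
            (∑ k : Fin 2, ∑ l : Fin 2, gradPsi t₂ u k * gradPsi t₂ u l * Om1 k l)^2)
        = -1/24 := by
  intro u hu
  have hsq : (t₂ - u) ^ 2 = t₁ / 3 := sq_sub_eq_of_eq_add_sqrt_or_sub_sqrt (by positivity) hu
  have hne : t₂ - u ≠ 0 := fun h0 => by
    rw [h0] at hsq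
    linarith
  exact ⟨by rw [hsq, sub_self], centralInvariant_eq hne⟩
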